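/- Inversion of the twist function (Lemma A.1 together with the accompanying Remark). Let m ≥ 1, let z_0 ∈ ℂ, and let φ be a nonzero rational function over ℂ with a pole of order exactly m at z_0; write its Laurent expansion at z_0 as φ(z) = Σ_{p ≤ m−1} ℓ_p (z−z_0)^{−(p+1)} (p ranging over integers ≤ m−1), so that ℓ_{m−1} ≠ 0. Then 1/φ extends holomorphically to z_0 with a zero of order exactly m; writing its Taylor expansion as 1/φ(z) = Σ_{p ≥ m−1} μ_p (z−z_0)^{p+1} and setting μ_p = 0 for p < m−1, the coefficients satisfy, for all q, r ∈ {0, …, m−1}: Σ_{p=0}^{m−1−r} μ_{p+q} ℓ_{p+r} = δ_{q,r}. In particular, the numbers κ_p := μ_p for 0 ≤ p ≤ 2m−2 solve the defining linear system of the generalised Segal–Sugawara coefficients, and κ_p = 0 for 0 ≤ p ≤ m−2. -/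

import Mathlib

/-! The linear system is the coefficient of `(z - z₀)^(q - r)` in the identity `φ⁻¹ * φ = 1`.
Since `φ⁻¹` has order `m` and `φ` has order `-m`, only the terms with
`m ≤ p + q + 1 ≤ m + q - r` survive in the Cauchy product, and these are exactly the terms
of the sum. -/

open scoped BigOperators

/-- The Laurent expansion of a rational function `f` at the point `z₀`, as a formal Laurent
series: expand `f(X + z₀)` at `0`. -/
noncomputable def laurentExpansion (z₀ : ℂ) (f : RatFunc ℂ) : LaurentSeries ℂ :=
  (RatFunc.laurent z₀ f : LaurentSeries ℂ)

namespace HahnSeries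

theorem order_inv {Γ K : Type*} [AddCommGroup Γ] [LinearOrder Γ] [IsOrderedAddMonoid Γ] [Field K]
    {x : HahnSeries Γ K} (hx : x ≠ 0) : x⁻¹.order = -x.order := by
  have h := order_mul (inv_ne_zero hx) hx
  rw [inv_mul_cancel₀ hx, order_one] at h
  exact eq_neg_of_add_eq_zero_left h.symm

end HahnSeries

namespace LaurentSeries

theorem coeff_mul_eq_sum_range {R : Type*} [Semiring R] {x y : LaurentSeries R} {c k : ℤ} {N : ℕ}
    (hx : c ≤ x.order) (hy : k - (c + N) < y.order) :
    (x * y).coeff k = ∑ p ∈ Finset.range N, x.coeff (c + p) * y.coeff (k - (c + p)) := by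
  rw [HahnSeries.coeff_mul]
  symm
  refine Finset.sum_bij_ne_zero (fun p _ _ => (c + p, k - (c + p))) ?_ ?_ ?_ ?_
  · intro p _ hp
    exact Finset.mem_antidiagonal.2
      ⟨left_ne_zero_of_mul hp, right_ne_zero_of_mul hp, add_sub_cancel _ _⟩
  · intro p _ _ p' _ _ h
    simpa using h
  · rintro ⟨a, b⟩ hab hne
    obtain ⟨ha, hb, rfl⟩ := Finset.mem_antidiagonal.1 hab
    have ha' := HahnSeries.order_le_of_coeff_ne_zero ha
    have hb' := HahnSeries.order_le_of_coeff_ne_zero hb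
    have hp : ((a - c).toNat : ℤ) = a - c := Int.toNat_of_nonneg (by omega)
    refine ⟨(a - c).toNat, Finset.mem_range.2 (by omega), ?_, ?_⟩ <;>
      simp only [hp, add_sub_cancel, add_sub_cancel_left]
    exact hne
  · intros; rfl

end LaurentSeries

theorem inversion_of_twist_function
    (m : ℕ) (hm : 1 ≤ m) (z₀ : ℂ) (f : RatFunc ℂ)
    (horder : (laurentExpansion z₀ f).order = -(m : ℤ)) :
    -- `ℓ_{m-1} ≠ 0`
    (laurentExpansion z₀ f).coeff (-(m : ℤ)) ≠ 0 ∧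
    -- `1/φ` extends holomorphically to `z₀` with a zero of order exactly `m`
    (laurentExpansion z₀ f)⁻¹.order = (m : ℤ) ∧
    -- `μ_p = 0` for `p < m - 1`
    (∀ p : ℤ, p < (m : ℤ) - 1 → (laurentExpansion z₀ f)⁻¹.coeff (p + 1) = 0) ∧
    -- the linear system `Σ_{p=0}^{m-1-r} μ_{p+q} ℓ_{p+r} = δ_{q,r}`
    (∀ q r : ℕ, q < m → r < m →
      ∑ p ∈ Finset.range (m - r),
        (laurentExpansion z₀ f)⁻¹.coeff ((p : ℤ) + (q : ℤ) + 1)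
          * (laurentExpansion z₀ f).coeff (-((p : ℤ) + (r : ℤ) + 1))
        = if q = r then 1 else 0) := by
  set φ := laurentExpansion z₀ f
  have hφ : φ ≠ 0 := fun h => by rw [h, HahnSeries.order_zero] at horder; omega
  have hφinv : φ⁻¹.order = m := by rw [HahnSeries.order_inv hφ, horder, neg_neg]
  refine ⟨horder ▸ HahnSeries.coeff_order_eq_zero.not.2 hφ, hφinv,
    fun p hp => HahnSeries.coeff_eq_zero_of_lt_order (by omega), fun q r hq hr => ?_⟩
  have hcoeff := LaurentSeries.coeff_mul_eq_sum_range (x := φ⁻¹) (y := φ) (c := q + 1)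
    (k := q - r) (N := m - r) (by omega) (by omega)
  rw [inv_mul_cancel₀ hφ, HahnSeries.coeff_one] at hcoeff
  simp only [sub_eq_zero, Nat.cast_inj] at hcoeff
  rw [hcoeff]
  refine Finset.sum_congr rfl fun p _ => ?_
  ring_nf
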